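/- Let β > 0. For every solution of the delayed Cucker–Smale system, all indices i, j and all t ≥ 2τ, one has |x_j(t−τ) − x_i(t−σ)| ≤ |x_j(τ) − x_i(2τ−σ)| + ∫_{2τ}^{t} ( G(s−τ) + β^{−1} e^{2τ} G(s−σ) + ∫_{s−τ}^{s−σ} G(r−τ) dr ) ds. -/

import Mathlib

/-!
Integrating `d/ds (x_j(s-τ) - x_i(s-σ)) = v_j(s-τ) - v_i(s-σ)` over `[2τ, t]` reduces the claim to
the pointwise bound `|v_j(s-τ) - v_i(s-σ)| ≤ d_v(s-τ) + ∫_{s-τ}^{s-σ} |v̇_i|`. As `0 ≤ ψ ≤ 1`, the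
system gives `|v̇_i(u)| ≤ d_v(u-τ) + |v_i(u-τ) - v_i(u-σ)| ≤ d_v(u-τ) + ∫_{u-τ}^{u-σ} max_k |v̇_k|`.
The `d_v` terms are dominated by `G`. In the remaining double integral of `max_k |v̇_k|`, enlarge
the inner interval to `[u-τ, s-σ]`, substitute `p = u - τ` and insert the weight
`e^{-(s-σ-p)} ≥ e^{-2τ}`: this bounds it by `e^{2τ}` times the memory term of `G(s-σ)`, which is at
most `β⁻¹ G(s-σ)`.
-/
open scoped BigOperators
open MeasureTheory

/-- Diameter of a configuration `w` at time `t` (used for positions and velocities). -/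
noncomputable def csDiam {N d : ℕ} (w : Fin N → ℝ → EuclideanSpace ℝ (Fin d)) (t : ℝ) : ℝ :=
  ⨆ i : Fin N, ⨆ j : Fin N, ‖w i t - w j t‖

/-- Maximum of the norms of `w' i t` over the agents `i`. -/
noncomputable def csMaxDer {N d : ℕ} (w' : Fin N → ℝ → EuclideanSpace ℝ (Fin d)) (t : ℝ) : ℝ :=
  ⨆ i : Fin N, ‖w' i t‖

/-- Lyapunov–Krasovskii functional
`G(t) = d_v(t) + β ∫_{max(0,t-2τ)}^t e^{-(t-s)} ∫_s^t max_i |v̇_i(r)| dr ds`. -/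
noncomputable def csG {N d : ℕ} (β τ : ℝ)
    (v v' : Fin N → ℝ → EuclideanSpace ℝ (Fin d)) (t : ℝ) : ℝ :=
  csDiam v t +
    β * ∫ s in (max 0 (t - 2 * τ))..t, Real.exp (-(t - s)) * ∫ r in s..t, csMaxDer v' r

/-- Minimal communication rate `a̲(t) = min_{i ≠ j} ψ(|x_i(t-σ) - x_j(t-τ)|)/(N-1)`. -/
noncomputable def csAMin {N d : ℕ} (ψ : ℝ → ℝ) (σ τ : ℝ)
    (x : Fin N → ℝ → EuclideanSpace ℝ (Fin d)) (t : ℝ) : ℝ :=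
  ⨅ p : {p : Fin N × Fin N // p.1 ≠ p.2},
    ψ ‖x p.val.1 (t - σ) - x p.val.2 (t - τ)‖ / (N - 1)

open Set intervalIntegral

section General

variable {X ι E : Type*} [TopologicalSpace X] [NormedAddCommGroup E] [NormedSpace ℝ E]

theorem ContinuousOn.ciSup_of_finite [Finite ι] {f : ι → X → ℝ} {s : Set X}
    (hf : ∀ i, ContinuousOn (f i) s) : ContinuousOn (fun x => ⨆ i, f i x) s := by
  rcases isEmpty_or_nonempty ι with hι | hι
  · simpa only [Real.iSup_of_isEmpty] using continuousOn_const
  · have := Fintype.ofFinite ι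
    simp only [← Finset.sup'_univ_eq_ciSup]
    exact ContinuousOn.finset_sup'_apply Finset.univ_nonempty fun i _ => hf i

theorem continuous_parametric_intervalIntegral_of_continuous_bounds {f : X → ℝ → E}
    (hf : Continuous f.uncurry) {a b : X → ℝ} (ha : Continuous a) (hb : Continuous b) :
    Continuous fun x => ∫ t in a x..b x, f x t := by
  have hint : ∀ x c d, IntervalIntegrable (f x) volume c d := fun x c d =>
    (hf.comp (Continuous.prodMk_right x)).intervalIntegrable c d
  refine ((continuous_parametric_intervalIntegral_of_continuous (μ := volume) (a₀ := 0) hf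
    hb).sub (continuous_parametric_intervalIntegral_of_continuous (μ := volume) (a₀ := 0) hf
    ha)).congr fun x => ?_
  exact integral_interval_sub_left (hint _ 0 _) (hint _ 0 _)

theorem continuous_intervalIntegral_of_continuous_bounds {D : ℝ → E} (hD : Continuous D)
    {a b : X → ℝ} (ha : Continuous a) (hb : Continuous b) :
    Continuous fun u => ∫ r in a u..b u, D r :=
  continuous_parametric_intervalIntegral_of_continuous_bounds (f := fun _ r => D r)
    (hD.comp continuous_snd) ha hb

theorem ContinuousOn.intervalIntegral_of_Ici {g : ℝ → E} {c : ℝ} (hg : ContinuousOn g (Ici c))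
    {a b : ℝ → ℝ} (ha : Continuous a) (hb : Continuous b) :
    ContinuousOn (fun u => ∫ r in a u..b u, g r) {u | c ≤ a u ∧ c ≤ b u} := by
  have hext : Continuous fun r => g (max r c) :=
    hg.comp_continuous (continuous_id.max continuous_const) fun r => le_max_right r c
  refine (continuous_intervalIntegral_of_continuous_bounds hext ha hb).continuousOn.congr
    fun u hu => integral_congr fun r hr => ?_
  have hcr : c ≤ r := (le_min hu.1 hu.2).trans hr.1
  simp only [max_eq_left hcr]

theorem norm_sub_le_integral_norm_deriv [CompleteSpace E] {f f' : ℝ → E} {a b : ℝ} (hab : a ≤ b)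
    (hf : ContinuousOn f (Icc a b)) (hderiv : ∀ x ∈ Ioo a b, HasDerivAt f (f' x) x)
    (hf' : ContinuousOn f' (Icc a b)) : ‖f b - f a‖ ≤ ∫ x in a..b, ‖f' x‖ := by
  rw [← integral_eq_sub_of_hasDerivAt_of_le hab hf hderiv
    (hf'.intervalIntegrable_of_Icc hab)]
  exact norm_integral_le_integral_norm hab

theorem norm_sum_div_card_smul_le {s : Finset ι} {c : ι → ℝ} {y : ι → E} {M : ℝ}
    (hc₀ : ∀ j ∈ s, 0 ≤ c j) (hc₁ : ∀ j ∈ s, c j ≤ 1) (hy : ∀ j ∈ s, ‖y j‖ ≤ M) (hM : 0 ≤ M) :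
    ‖∑ j ∈ s, (c j / s.card) • y j‖ ≤ M := by
  have hterm : ∀ j ∈ s, ‖(c j / s.card) • y j‖ ≤ M / s.card := by
    intro j hj
    rw [norm_smul, Real.norm_of_nonneg (by have := hc₀ j hj; positivity), div_mul_eq_mul_div]
    gcongr
    simpa using mul_le_mul (hc₁ j hj) (hy j hj) (norm_nonneg _) zero_le_one
  calc ‖∑ j ∈ s, (c j / s.card) • y j‖ ≤ s.card * (M / s.card) := by
        simpa using norm_sum_le_of_le s hterm
    _ ≤ M := by
        rcases (Nat.cast_nonneg (α := ℝ) s.card).eq_or_lt with h | h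
        · rw [← h, zero_mul]; exact hM
        · rw [mul_div_cancel₀ _ h.ne']

end General

section Configuration

variable {N d : ℕ}

theorem norm_sub_le_csDiam (w : Fin N → ℝ → EuclideanSpace ℝ (Fin d)) (i j : Fin N) (t : ℝ) :
    ‖w i t - w j t‖ ≤ csDiam w t :=
  (le_ciSup (finite_range fun l => ‖w i t - w l t‖).bddAbove j).trans
    (le_ciSup (finite_range fun k => ⨆ l, ‖w k t - w l t‖).bddAbove i)

theorem csDiam_nonneg (w : Fin N → ℝ → EuclideanSpace ℝ (Fin d)) (t : ℝ) : 0 ≤ csDiam w t :=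
  Real.iSup_nonneg fun _ => Real.iSup_nonneg fun _ => norm_nonneg _

theorem ContinuousOn.csDiam {w : Fin N → ℝ → EuclideanSpace ℝ (Fin d)} {s : Set ℝ}
    (hw : ∀ i, ContinuousOn (w i) s) : ContinuousOn (csDiam w) s :=
  ContinuousOn.ciSup_of_finite fun i =>
    ContinuousOn.ciSup_of_finite fun j => ((hw i).sub (hw j)).norm

theorem norm_le_csMaxDer (w' : Fin N → ℝ → EuclideanSpace ℝ (Fin d)) (i : Fin N) (t : ℝ) :
    ‖w' i t‖ ≤ csMaxDer w' t :=
  le_ciSup (finite_range fun k => ‖w' k t‖).bddAbove i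

theorem csMaxDer_nonneg (w' : Fin N → ℝ → EuclideanSpace ℝ (Fin d)) : 0 ≤ csMaxDer w' :=
  fun _ => Real.iSup_nonneg fun _ => norm_nonneg _

theorem Continuous.csMaxDer {w' : Fin N → ℝ → EuclideanSpace ℝ (Fin d)}
    (hw' : ∀ i, Continuous (w' i)) : Continuous (csMaxDer w') :=
  continuousOn_univ.mp <| ContinuousOn.ciSup_of_finite fun i => (hw' i).norm.continuousOn

theorem csMaxDer_eqOn {w' u' : Fin N → ℝ → EuclideanSpace ℝ (Fin d)} {s : Set ℝ}
    (h : ∀ i, EqOn (w' i) (u' i) s) : EqOn (csMaxDer w') (csMaxDer u') s := fun t ht => by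
  simp only [csMaxDer, h _ ht]

end Configuration

noncomputable def lkMemory (τ : ℝ) (D : ℝ → ℝ) (w : ℝ) : ℝ :=
  ∫ s in (max 0 (w - 2 * τ))..w, Real.exp (-(w - s)) * ∫ r in s..w, D r

section LKMemory

variable {τ : ℝ} {D : ℝ → ℝ}

theorem csG_eq_csDiam_add_lkMemory {N d : ℕ} (β : ℝ) (v v' : Fin N → ℝ → EuclideanSpace ℝ (Fin d))
    (w : ℝ) : csG β τ v v' w = csDiam v w + β * lkMemory τ (csMaxDer v') w := rfl

theorem lkMemory_congr {D' : ℝ → ℝ} (h : EqOn D D' (Ioi 0)) {w : ℝ} (hw : 0 ≤ w) :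
    lkMemory τ D w = lkMemory τ D' w := by
  refine integral_congr_ae (Filter.Eventually.of_forall fun s hs => ?_)
  have hs₀ : 0 ≤ s := (le_min (le_max_left _ _) hw).trans hs.1.le
  congr 1
  exact integral_congr_ae (Filter.Eventually.of_forall fun r hr =>
    h ((le_min hs₀ hw).trans_lt hr.1))

theorem lkMemory_nonneg (hτ : 0 ≤ τ) (hD : 0 ≤ D) {w : ℝ} (hw : 0 ≤ w) : 0 ≤ lkMemory τ D w :=
  integral_nonneg (max_le hw (by linarith)) fun s hs =>
    mul_nonneg (Real.exp_pos _).le (integral_nonneg hs.2 fun r _ => hD r)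

theorem Continuous.lkMemory (hD : Continuous D) : Continuous (lkMemory τ D) := by
  have hprim : Continuous fun p : ℝ × ℝ => ∫ r in p.2..p.1, D r :=
    continuous_intervalIntegral_of_continuous_bounds hD continuous_snd continuous_fst
  exact continuous_parametric_intervalIntegral_of_continuous_bounds
    (f := fun w s => Real.exp (-(w - s)) * ∫ r in s..w, D r) (by fun_prop)
    (by fun_prop) continuous_id

theorem integral_integral_le_exp_mul_lkMemory (hD : Continuous D) (hD₀ : 0 ≤ D) {σ s : ℝ}
    (hσ : 0 ≤ σ) (hστ : σ ≤ τ) (hs : 2 * τ ≤ s) :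
    ∫ u in (s - τ)..(s - σ), ∫ r in (u - τ)..(u - σ), D r ≤
      Real.exp (2 * τ) * lkMemory τ D (s - σ) := by
  have hprim : Continuous fun p => ∫ r in p..(s - σ), D r :=
    continuous_intervalIntegral_of_continuous_bounds hD continuous_id continuous_const
  have hweighted : Continuous fun p => Real.exp (-(s - σ - p)) * ∫ r in p..(s - σ), D r := by
    fun_prop
  calc ∫ u in (s - τ)..(s - σ), ∫ r in (u - τ)..(u - σ), D r
      ≤ ∫ u in (s - τ)..(s - σ), ∫ r in (u - τ)..(s - σ), D r := by
        refine integral_mono_on (by linarith) ?_ ?_ fun u hu => ?_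
        · exact (continuous_intervalIntegral_of_continuous_bounds hD (by fun_prop)
            (by fun_prop)).intervalIntegrable _ _
        · exact (hprim.comp (continuous_sub_right τ)).intervalIntegrable _ _
        · exact integral_mono_interval le_rfl (by linarith [hu.1]) (by linarith [hu.2])
            (Filter.Eventually.of_forall fun r => hD₀ r) (hD.intervalIntegrable _ _)
    _ = ∫ p in (s - 2 * τ)..(s - σ - τ), ∫ r in p..(s - σ), D r := by
        rw [integral_comp_sub_right (fun p => ∫ r in p..(s - σ), D r)]
        ring_nf
    _ ≤ ∫ p in (s - 2 * τ)..(s - σ - τ),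
          Real.exp (2 * τ) * (Real.exp (-(s - σ - p)) * ∫ r in p..(s - σ), D r) := by
        refine integral_mono_on (by linarith) (hprim.intervalIntegrable _ _)
          ((continuous_const.mul hweighted).intervalIntegrable _ _) fun p hp => ?_
        have hexp : 1 ≤ Real.exp (2 * τ) * Real.exp (-(s - σ - p)) := by
          rw [← Real.exp_add]
          exact Real.one_le_exp (by linarith [hp.1])
        have hint : 0 ≤ ∫ r in p..(s - σ), D r :=
          integral_nonneg (by linarith [hp.2]) fun r _ => hD₀ r
        nlinarith
    _ ≤ Real.exp (2 * τ) * lkMemory τ D (s - σ) := by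
        rw [intervalIntegral.integral_const_mul]
        refine mul_le_mul_of_nonneg_left ?_ (Real.exp_pos _).le
        refine integral_mono_interval (max_le (by linarith) (by linarith)) (by linarith)
          (by linarith) (ae_restrict_of_forall_mem measurableSet_Ioc fun p hp => ?_)
          (hweighted.intervalIntegrable _ _)
        exact mul_nonneg (Real.exp_pos _).le (integral_nonneg hp.2 fun r _ => hD₀ r)

end LKMemory

noncomputable def csBound {N d : ℕ} (β σ τ : ℝ) (v v' : Fin N → ℝ → EuclideanSpace ℝ (Fin d))
    (s : ℝ) : ℝ :=
  csG β τ v v' (s - τ) + β⁻¹ * Real.exp (2 * τ) * csG β τ v v' (s - σ)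
    + ∫ r in (s - τ)..(s - σ), csG β τ v v' (r - τ)

section Velocity

variable {N d : ℕ} {β σ τ : ℝ} {v v' : Fin N → ℝ → EuclideanSpace ℝ (Fin d)}

theorem csG_congr {u' : Fin N → ℝ → EuclideanSpace ℝ (Fin d)}
    (h : ∀ i, EqOn (v' i) (u' i) (Ioi 0)) {w : ℝ} (hw : 0 ≤ w) :
    csG β τ v v' w = csG β τ v u' w := by
  simp only [csG_eq_csDiam_add_lkMemory, lkMemory_congr (csMaxDer_eqOn h) hw]

theorem csBound_congr {u' : Fin N → ℝ → EuclideanSpace ℝ (Fin d)}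
    (h : ∀ i, EqOn (v' i) (u' i) (Ioi 0)) (hσ : 0 ≤ σ) (hστ : σ ≤ τ) {s : ℝ} (hs : 2 * τ ≤ s) :
    csBound β σ τ v v' s = csBound β σ τ v u' s := by
  unfold csBound
  rw [csG_congr h (by linarith), csG_congr h (by linarith),
    integral_congr fun _ hr => csG_congr h ?_]
  rw [uIcc_of_le (by linarith)] at hr
  linarith [hr.1]

theorem csDiam_le_csG (hβ : 0 ≤ β) (hτ : 0 ≤ τ) {w : ℝ} (hw : 0 ≤ w) :
    csDiam v w ≤ csG β τ v v' w :=
  le_add_of_nonneg_right (mul_nonneg hβ (lkMemory_nonneg hτ (csMaxDer_nonneg v') hw))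

theorem lkMemory_le_inv_mul_csG (hβ : 0 < β) (w : ℝ) :
    lkMemory τ (csMaxDer v') w ≤ β⁻¹ * csG β τ v v' w := by
  rw [csG_eq_csDiam_add_lkMemory, mul_add, inv_mul_cancel_left₀ hβ.ne']
  exact le_add_of_nonneg_left (mul_nonneg (inv_nonneg.2 hβ.le) (csDiam_nonneg v w))

variable (hvc : ∀ i, ContinuousOn (v i) (Ici 0)) (hv'c : ∀ i, Continuous (v' i))
  (hvder : ∀ i, ∀ t, 0 < t → HasDerivAt (v i) (v' i t) t)
include hvc hv'c

theorem continuousOn_csG : ContinuousOn (csG β τ v v') (Ici 0) :=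
  (ContinuousOn.csDiam hvc).add
    (continuous_const.mul (Continuous.csMaxDer hv'c).lkMemory).continuousOn

theorem continuousOn_csBound (hσ : 0 ≤ σ) (hστ : σ ≤ τ) :
    ContinuousOn (csBound β σ τ v v') (Ici (2 * τ)) := by
  have hG := continuousOn_csG (β := β) (τ := τ) hvc hv'c
  have hshift : ∀ c, c ≤ τ → ContinuousOn (fun s => csG β τ v v' (s - c)) (Ici (2 * τ)) :=
    fun c hc => hG.comp (continuous_sub_right c).continuousOn fun s hs => by
      simp only [mem_Ici] at hs ⊢; linarith
  have hinner : ContinuousOn (fun s => ∫ r in (s - τ)..(s - σ), csG β τ v v' (r - τ))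
      (Ici (2 * τ)) :=
    ((hG.comp (continuous_sub_right τ).continuousOn fun r hr => by
      simp only [mem_Ici] at hr ⊢; linarith).intervalIntegral_of_Ici
        (continuous_sub_right τ) (continuous_sub_right σ)).mono fun s hs => by
      simp only [mem_Ici] at hs; exact ⟨by linarith, by linarith⟩
  exact ((hshift τ le_rfl).add (continuousOn_const.mul (hshift σ hστ))).add hinner

include hvder

theorem norm_sub_le_integral_norm_deriv_of_nonneg (i : Fin N) {a b : ℝ} (ha : 0 ≤ a)
    (hab : a ≤ b) : ‖v i b - v i a‖ ≤ ∫ r in a..b, ‖v' i r‖ :=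
  norm_sub_le_integral_norm_deriv hab ((hvc i).mono fun _ hr => ha.trans hr.1)
    (fun r hr => hvder i r (ha.trans_lt hr.1)) (hv'c i).continuousOn

theorem norm_deriv_le_csDiam_add_integral (hστ : σ ≤ τ)
    (hv'le : ∀ i u, 0 < u → ‖v' i u‖ ≤ csDiam v (u - τ) + ‖v i (u - τ) - v i (u - σ)‖)
    (i : Fin N) {u : ℝ} (hu : 0 < u) (huτ : τ ≤ u) :
    ‖v' i u‖ ≤ csDiam v (u - τ) + ∫ r in (u - τ)..(u - σ), csMaxDer v' r := by
  have hincr := norm_sub_le_integral_norm_deriv_of_nonneg hvc hv'c hvder i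
    (sub_nonneg.2 huτ) (by linarith : u - τ ≤ u - σ)
  have hmax : ∫ r in (u - τ)..(u - σ), ‖v' i r‖ ≤ ∫ r in (u - τ)..(u - σ), csMaxDer v' r :=
    integral_mono_on (by linarith) ((hv'c i).norm.intervalIntegrable _ _)
      ((Continuous.csMaxDer hv'c).intervalIntegrable _ _) fun r _ => norm_le_csMaxDer v' i r
  rw [norm_sub_rev] at hincr
  linarith [hv'le i u hu]

theorem norm_velocity_sub_le_csBound (hβ : 0 < β) (hσ : 0 ≤ σ) (hστ : σ ≤ τ)
    (hv'le : ∀ i u, 0 < u → ‖v' i u‖ ≤ csDiam v (u - τ) + ‖v i (u - τ) - v i (u - σ)‖)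
    (i j : Fin N) {s : ℝ} (hs : 2 * τ ≤ s) :
    ‖v j (s - τ) - v i (s - σ)‖ ≤ csBound β σ τ v v' s := by
  have hD := Continuous.csMaxDer hv'c
  have hab : s - τ ≤ s - σ := by linarith
  have hdiam : ContinuousOn (fun u => csDiam v (u - τ)) (Icc (s - τ) (s - σ)) :=
    (ContinuousOn.csDiam hvc).comp (continuous_sub_right τ).continuousOn fun u hu => by
      simp only [mem_Ici]; linarith [hu.1]
  have hdouble : Continuous fun u => ∫ r in (u - τ)..(u - σ), csMaxDer v' r :=
    continuous_intervalIntegral_of_continuous_bounds hD (continuous_sub_right τ)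
      (continuous_sub_right σ)
  have hderiv : ∫ u in (s - τ)..(s - σ), ‖v' i u‖ ≤
      (∫ u in (s - τ)..(s - σ), csDiam v (u - τ)) +
        ∫ u in (s - τ)..(s - σ), ∫ r in (u - τ)..(u - σ), csMaxDer v' r := by
    rw [← integral_add (hdiam.intervalIntegrable_of_Icc hab) (hdouble.intervalIntegrable _ _)]
    refine integral_mono_on_of_le_Ioo hab ((hv'c i).norm.intervalIntegrable _ _)
      ((hdiam.intervalIntegrable_of_Icc hab).add (hdouble.intervalIntegrable _ _)) fun u hu => ?_
    exact norm_deriv_le_csDiam_add_integral hvc hv'c hvder hστ hv'le i (by linarith [hu.1])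
      (by linarith [hu.1])
  have hdiamG : ∫ u in (s - τ)..(s - σ), csDiam v (u - τ) ≤
      ∫ u in (s - τ)..(s - σ), csG β τ v v' (u - τ) := by
    refine integral_mono_on hab (hdiam.intervalIntegrable_of_Icc hab) ?_ fun u hu =>
      csDiam_le_csG hβ.le (by linarith) (by linarith [hu.1])
    exact ((continuousOn_csG hvc hv'c).comp (continuous_sub_right τ).continuousOn fun u hu => by
      simp only [mem_Ici]; linarith [hu.1]).intervalIntegrable_of_Icc hab
  have hdoubleG := integral_integral_le_exp_mul_lkMemory hD (csMaxDer_nonneg v') hσ hστ hs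
  have htailG := lkMemory_le_inv_mul_csG (v := v) (v' := v') (τ := τ) hβ (s - σ)
  have hincr := norm_sub_le_integral_norm_deriv_of_nonneg hvc hv'c hvder i (by linarith) hab
  have hfirst := csDiam_le_csG (v := v) (v' := v') (τ := τ) hβ.le (by linarith)
    (by linarith : 0 ≤ s - τ)
  calc ‖v j (s - τ) - v i (s - σ)‖
      ≤ ‖v j (s - τ) - v i (s - τ)‖ + ‖v i (s - σ) - v i (s - τ)‖ := by
        rw [norm_sub_rev (v i (s - σ))]; exact norm_sub_le_norm_sub_add_norm_sub _ _ _
    _ ≤ csDiam v (s - τ) + ∫ u in (s - τ)..(s - σ), ‖v' i u‖ :=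
        add_le_add (norm_sub_le_csDiam v j i _) hincr
    _ ≤ csBound β σ τ v v' s := by
        unfold csBound
        have := mul_le_mul_of_nonneg_left htailG (Real.exp_pos (2 * τ)).le
        linarith

end Velocity

theorem norm_position_gap_le {N d : ℕ} {β σ τ : ℝ} {x v v' : Fin N → ℝ → EuclideanSpace ℝ (Fin d)}
    (hβ : 0 < β) (hσ : 0 ≤ σ) (hστ : σ ≤ τ)
    (hxc : ∀ i, ContinuousOn (x i) (Ici 0)) (hvc : ∀ i, ContinuousOn (v i) (Ici 0))
    (hv'c : ∀ i, Continuous (v' i))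
    (hxder : ∀ i, ∀ t, 0 < t → HasDerivAt (x i) (v i t) t)
    (hvder : ∀ i, ∀ t, 0 < t → HasDerivAt (v i) (v' i t) t)
    (hv'le : ∀ i u, 0 < u → ‖v' i u‖ ≤ csDiam v (u - τ) + ‖v i (u - τ) - v i (u - σ)‖)
    (i j : Fin N) {t : ℝ} (ht : 2 * τ ≤ t) :
    ‖x j (t - τ) - x i (t - σ)‖ ≤
      ‖x j τ - x i (2 * τ - σ)‖ + ∫ s in (2 * τ)..t, csBound β σ τ v v' s := by
  have hshift : ∀ {f : ℝ → EuclideanSpace ℝ (Fin d)} {c : ℝ}, ContinuousOn f (Ici 0) → c ≤ τ →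
      ContinuousOn (fun s => f (s - c)) (Icc (2 * τ) t) := fun hf hc =>
    hf.comp (continuous_sub_right _).continuousOn fun s hs => by
      simp only [mem_Ici]; linarith [hs.1]
  have hgap := norm_sub_le_integral_norm_deriv ht
    (f := fun s => x j (s - τ) - x i (s - σ)) ((hshift (hxc j) le_rfl).sub (hshift (hxc i) hστ))
    (fun s hs => ((hxder j _ (by linarith [hs.1])).comp_sub_const s τ).sub
      ((hxder i _ (by linarith [hs.1])).comp_sub_const s σ))
    ((hshift (hvc j) le_rfl).sub (hshift (hvc i) hστ))
  rw [show 2 * τ - τ = τ by ring] at hgap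
  calc ‖x j (t - τ) - x i (t - σ)‖
      ≤ ‖x j τ - x i (2 * τ - σ)‖ + ‖x j (t - τ) - x i (t - σ) - (x j τ - x i (2 * τ - σ))‖ :=
        norm_le_norm_add_norm_sub' _ _
    _ ≤ ‖x j τ - x i (2 * τ - σ)‖ + ∫ s in (2 * τ)..t, csBound β σ τ v v' s := by
        refine add_le_add_right (hgap.trans (integral_mono_on ht ?_ ?_ fun s hs => ?_)) _
        · exact ((hshift (hvc j) le_rfl).sub (hshift (hvc i) hστ)).norm.intervalIntegrable_of_Icc ht
        · exact ((continuousOn_csBound hvc hv'c hσ hστ).mono fun s hs => hs.1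
            ).intervalIntegrable_of_Icc ht
        · exact norm_velocity_sub_le_csBound hvc hv'c hvder hβ hσ hστ hv'le i j hs.1

noncomputable def csField {N d : ℕ} (ψ : ℝ → ℝ) (σ τ : ℝ)
    (x v : Fin N → ℝ → EuclideanSpace ℝ (Fin d)) (i : Fin N) (t : ℝ) :
    EuclideanSpace ℝ (Fin d) :=
  ∑ j ∈ Finset.univ.erase i,
    (ψ ‖x i (t - σ) - x j (t - τ)‖ / (N - 1)) • (v j (t - τ) - v i (t - σ))

section Field

variable {N d : ℕ} {ψ : ℝ → ℝ} {σ τ : ℝ} {x v : Fin N → ℝ → EuclideanSpace ℝ (Fin d)}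

theorem norm_csField_le (hψ₀ : ∀ s, 0 ≤ s → 0 ≤ ψ s) (hψ₁ : ∀ s, 0 ≤ s → ψ s ≤ 1)
    (i : Fin N) (t : ℝ) :
    ‖csField ψ σ τ x v i t‖ ≤ csDiam v (t - τ) + ‖v i (t - τ) - v i (t - σ)‖ := by
  have hcard : ((Finset.univ.erase i).card : ℝ) = N - 1 := by
    rw [Finset.card_erase_of_mem (Finset.mem_univ i), Finset.card_univ, Fintype.card_fin,
      Nat.cast_sub i.pos, Nat.cast_one]
  unfold csField
  rw [← hcard]
  refine norm_sum_div_card_smul_le (c := fun j => ψ ‖x i (t - σ) - x j (t - τ)‖)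
    (y := fun j => v j (t - τ) - v i (t - σ)) (fun j _ => hψ₀ _ (norm_nonneg _))
    (fun j _ => hψ₁ _ (norm_nonneg _)) (fun j _ => ?_)
    (add_nonneg (csDiam_nonneg v _) (norm_nonneg _))
  calc ‖v j (t - τ) - v i (t - σ)‖
      ≤ ‖v j (t - τ) - v i (t - τ)‖ + ‖v i (t - τ) - v i (t - σ)‖ :=
        norm_sub_le_norm_sub_add_norm_sub _ _ _
    _ ≤ csDiam v (t - τ) + ‖v i (t - τ) - v i (t - σ)‖ :=
        add_le_add_left (norm_sub_le_csDiam v j i _) _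

theorem continuousOn_csField (hψ : ContinuousOn ψ (Ici 0)) (hx : ∀ i, ContinuousOn (x i) (Ici (-τ)))
    (hv : ∀ i, ContinuousOn (v i) (Ici (-τ))) (hστ : σ ≤ τ) (i : Fin N) :
    ContinuousOn (csField ψ σ τ x v i) (Ici 0) := by
  have hshift : ∀ {f : ℝ → EuclideanSpace ℝ (Fin d)} {c : ℝ}, ContinuousOn f (Ici (-τ)) →
      c ≤ τ → ContinuousOn (fun t => f (t - c)) (Ici 0) := fun hf hc =>
    hf.comp (continuous_sub_right _).continuousOn fun t ht => by
      simp only [mem_Ici] at ht ⊢; linarith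
  refine continuousOn_finsetSum _ fun j _ => ContinuousOn.fun_smul ?_ ?_
  · exact (hψ.comp ((hshift (hx i) hστ).sub (hshift (hx j) le_rfl)).norm
      fun t _ => norm_nonneg _).div_const _
  · exact (hshift (hv j) le_rfl).sub (hshift (hv i) hστ)

end Field

theorem stmt_15_general
    (N d : ℕ)
    (σ τ : ℝ) (hσ : 0 ≤ σ) (hστ : σ ≤ τ)
    (β : ℝ) (hβ : 0 < β)
    (ψ : ℝ → ℝ)
    (hψpos : ∀ s, 0 ≤ s → 0 < ψ s)
    (hψcont : ContinuousOn ψ (Set.Ici 0))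
    (hψbdd : ∀ s, 0 ≤ s → ψ s ≤ 1)
    (x v v' : Fin N → ℝ → EuclideanSpace ℝ (Fin d))
    (hxc : ∀ i, ContinuousOn (x i) (Set.Ici (-τ)))
    (hvc : ∀ i, ContinuousOn (v i) (Set.Ici (-τ)))
    (hxder : ∀ i, ∀ t, -τ < t → HasDerivAt (x i) (v i t) t)
    (hvder : ∀ i, ∀ t > (0:ℝ), HasDerivAt (v i) (v' i t) t)
    (hode : ∀ i, ∀ t > (0:ℝ),
      v' i t = ∑ j ∈ Finset.univ.erase i,
        (ψ ‖x i (t - σ) - x j (t - τ)‖ / (N - 1)) • (v j (t - τ) - v i (t - σ))) :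
    ∀ (i j : Fin N), ∀ t, 2 * τ ≤ t →
      ‖x j (t - τ) - x i (t - σ)‖ ≤ ‖x j τ - x i (2 * τ - σ)‖
        + ∫ s in (2 * τ)..t,
            (csG β τ v v' (s - τ) + β⁻¹ * Real.exp (2 * τ) * csG β τ v v' (s - σ)
              + ∫ r in (s - τ)..(s - σ), csG β τ v v' (r - τ)) := by
  intro i j t ht
  have hτ₀ : 0 ≤ τ := hσ.trans hστ
  have hIci : Ici (0 : ℝ) ⊆ Ici (-τ) := Ici_subset_Ici.2 (neg_nonpos.2 hτ₀)
  -- `v'` is unconstrained at `0`: replace it by the field, extended continuously to `(-∞, 0]`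
  set u' : Fin N → ℝ → EuclideanSpace ℝ (Fin d) := fun k s => csField ψ σ τ x v k (max s 0)
  have hu'c : ∀ k, Continuous (u' k) := fun k =>
    (continuousOn_csField hψcont hxc hvc hστ k).comp_continuous
      (continuous_id.max continuous_const) fun s => le_max_right s 0
  have hv'u' : ∀ k, EqOn (v' k) (u' k) (Ioi 0) := fun k s hs => by
    simp only [u', max_eq_left (le_of_lt (mem_Ioi.1 hs))]
    exact hode k s hs
  have hgap := norm_position_gap_le (β := β) hβ hσ hστ (fun k => (hxc k).mono hIci)
    (fun k => (hvc k).mono hIci) hu'c (fun k s hs => hxder k s ((neg_nonpos.2 hτ₀).trans_lt hs))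
    (fun k s hs => hv'u' k hs ▸ hvder k s hs)
    (fun k s hs => by
      simpa only [u', max_eq_left hs.le] using
        norm_csField_le (fun r hr => (hψpos r hr).le) hψbdd k s)
    i j ht
  refine hgap.trans_eq (congrArg _ (integral_congr fun s hs => ?_))
  rw [uIcc_of_le ht] at hs
  exact (csBound_congr hv'u' hσ hστ hs.1).symm

theorem stmt_15
    (N d : ℕ) (hN : 2 ≤ N) (hd : 1 ≤ d)
    (σ τ : ℝ) (hσ : 0 ≤ σ) (hστ : σ ≤ τ) (hτ : 0 < τ)
    (β : ℝ) (hβ : 0 < β)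
    (ψ : ℝ → ℝ)
    (hψpos : ∀ s, 0 ≤ s → 0 < ψ s)
    (hψcont : ContinuousOn ψ (Set.Ici 0))
    (hψmono : ∀ s t, 0 ≤ s → s ≤ t → ψ t ≤ ψ s)
    (hψbdd : ∀ s, 0 ≤ s → ψ s ≤ 1)
    (x v v' : Fin N → ℝ → EuclideanSpace ℝ (Fin d))
    (hxc : ∀ i, ContinuousOn (x i) (Set.Ici (-τ)))
    (hvc : ∀ i, ContinuousOn (v i) (Set.Ici (-τ)))
    (hxder : ∀ i, ∀ t, -τ < t → HasDerivAt (x i) (v i t) t)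
    (hvder : ∀ i, ∀ t > (0:ℝ), HasDerivAt (v i) (v' i t) t)
    (hode : ∀ i, ∀ t > (0:ℝ),
      v' i t = ∑ j ∈ Finset.univ.erase i,
        (ψ ‖x i (t - σ) - x j (t - τ)‖ / (N - 1)) • (v j (t - τ) - v i (t - σ))) :
    ∀ (i j : Fin N), ∀ t, 2 * τ ≤ t →
      ‖x j (t - τ) - x i (t - σ)‖ ≤ ‖x j τ - x i (2 * τ - σ)‖
        + ∫ s in (2 * τ)..t,
            (csG β τ v v' (s - τ) + β⁻¹ * Real.exp (2 * τ) * csG β τ v v' (s - σ)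
              + ∫ r in (s - τ)..(s - σ), csG β τ v v' (r - τ)) :=
  stmt_15_general N d σ τ hσ hστ β hβ ψ hψpos hψcont hψbdd x v v' hxc hvc hxder hvder hode
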